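/- Let G be a C_5-free graph, xy an edge, and W = N(x) ∩ N(y) with |W| ≥ 3. Then W is an independent set in G. -/

import Mathlib

open SimpleGraph Finset Function

noncomputable local instance {V : Type*} (G : SimpleGraph V) : DecidableRel G.Adj :=
  fun _ _ => Classical.dec _

/-- `G` contains a copy of the 5-cycle as a subgraph. -/
def HasC5Copy {V : Type*} (G : SimpleGraph V) : Prop :=
  ∃ f : Fin 5 → V, Injective f ∧ ∀ i, G.Adj (f i) (f (i + 1))

/-- `G` contains two vertex-disjoint copies of the 5-cycle. -/
def HasTwoDisjointC5 {V : Type*} (G : SimpleGraph V) : Prop :=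
  ∃ f g : Fin 5 → V, Injective f ∧ Injective g ∧
    (∀ i, G.Adj (f i) (f (i + 1))) ∧ (∀ i, G.Adj (g i) (g (i + 1))) ∧
    ∀ i j, f i ≠ g j

/-- The join of two graphs. -/
def GraphJoin {V W : Type*} (G : SimpleGraph V) (H : SimpleGraph W) : SimpleGraph (V ⊕ W) where
  Adj x y :=
    match x, y with
    | Sum.inl a, Sum.inl b => G.Adj a b
    | Sum.inr a, Sum.inr b => H.Adj a b
    | Sum.inl _, Sum.inr _ => True
    | Sum.inr _, Sum.inl _ => True
  symm := ⟨by rintro (a|a) (b|b) h <;> simp_all <;> exact h.symm⟩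
  loopless := ⟨by rintro (a|a) h; exacts [G.irrefl h, H.irrefl h]⟩

/-- `G` contains `k` pairwise vertex-disjoint copies of `K_r`. -/
def HasDisjointCliques {V : Type*} (G : SimpleGraph V) (k r : ℕ) : Prop :=
  ∃ f : Fin k → Finset V, (∀ i, G.IsNClique r (f i)) ∧
    ∀ i j, i ≠ j → Disjoint (f i) (f j)

/-- Six pairwise vertex-disjoint copies of `P₄` inside the neighborhood of `v`. -/
def SixDisjointP4InNbhd {V : Type*} (G : SimpleGraph V) (v : V) : Prop :=
  ∃ f : Fin 6 → Fin 4 → V,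
    Injective (fun p : Fin 6 × Fin 4 => f p.1 p.2) ∧
    (∀ i j, G.Adj v (f i j)) ∧
    (∀ i, G.Adj (f i 0) (f i 1) ∧ G.Adj (f i 1) (f i 2) ∧ G.Adj (f i 2) (f i 3))

/-- `u` is joined to (at least) `t` pairwise disjoint `r`-cliques inside `S`. -/
def JoinedToDisjointCliques {V : Type*} (G : SimpleGraph V) (u : V) (S : Set V) (t r : ℕ) : Prop :=
  ∃ f : Fin t → Finset V, (∀ j, ↑(f j) ⊆ S ∧ G.IsNClique r (f j) ∧ ∀ w ∈ f j, G.Adj u w) ∧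
    ∀ i j, i ≠ j → Disjoint (f i) (f j)



/-- If `G` is `C₅`-free, `xy` is an edge and `|N(x) ∩ N(y)| ≥ 3`, then `N(x) ∩ N(y)`
is an independent set. -/
theorem stmt16 (n : ℕ) (G : SimpleGraph (Fin n)) (hG : ¬ HasC5Copy G)
    (x y : Fin n) (hxy : G.Adj x y)
    (hW : 3 ≤ (G.neighborFinset x ∩ G.neighborFinset y).card) :
    ∀ a ∈ G.neighborFinset x ∩ G.neighborFinset y,
      ∀ b ∈ G.neighborFinset x ∩ G.neighborFinset y, ¬ G.Adj a b := by
  intro a ha b hb hab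
  simp only [Finset.mem_inter, SimpleGraph.mem_neighborFinset] at ha hb
  obtain ⟨hxa, hya⟩ := ha
  obtain ⟨hxb, hyb⟩ := hb
  -- find c ∈ W distinct from a, b
  have hcard : 0 < ((G.neighborFinset x ∩ G.neighborFinset y) \ {a, b}).card := by
    have := Finset.le_card_sdiff ({a, b} : Finset (Fin n))
      (G.neighborFinset x ∩ G.neighborFinset y)
    have h2 : ({a, b} : Finset (Fin n)).card ≤ 2 := Finset.card_insert_le _ _ |>.trans (by simp)
    omega
  obtain ⟨c, hc⟩ := Finset.card_pos.mp hcard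
  simp only [Finset.mem_sdiff, Finset.mem_inter, SimpleGraph.mem_neighborFinset,
    Finset.mem_insert, Finset.mem_singleton, not_or] at hc
  obtain ⟨⟨hxc, hyc⟩, hca, hcb⟩ := hc
  apply hG
  refine ⟨![c, x, a, b, y], ?_, ?_⟩
  · have hab' := hab.ne
    have hxy' := hxy.ne
    intro i j hij
    fin_cases i <;> fin_cases j <;> simp_all <;>
      first
        | rfl
        | (exact absurd hij (by simp_all [G.ne_of_adj, (G.ne_of_adj ·).symm, eq_comm]))
        | skip
    all_goals
      exfalso
      first
        | exact hxa.ne hij | exact hxa.ne hij.symm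
        | exact hya.ne hij | exact hya.ne hij.symm
        | exact hxb.ne hij | exact hxb.ne hij.symm
        | exact hyb.ne hij | exact hyb.ne hij.symm
        | exact hxc.ne hij | exact hxc.ne hij.symm
        | exact hyc.ne hij | exact hyc.ne hij.symm
        | exact hab.ne hij | exact hab.ne hij.symm
        | exact hxy.ne hij | exact hxy.ne hij.symm
        | exact hca hij | exact hca hij.symm
        | exact hcb hij | exact hcb hij.symm
  · intro i
    fin_cases i <;> simp [hxc.symm, hxa, hab, hyb.symm, hyc]
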